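/- For all x, y ∈ J and every word σ ∈ Ω, one has ξ^{-1} ‖φ'_σ‖ d(x,y) ≤ d(φ_σ(x), φ_σ(y)) ≤ ‖φ'_σ‖ d(x,y), where d denotes the Euclidean distance on ℝ. -/

import Mathlib

open MeasureTheory Filter Metric

noncomputable section

/-- A cookie-cutter system on `J = [0,1]`. -/
structure CookieCutter where
  N : ℕ
  hN : 2 ≤ N
  Jsub : Fin N → Set ℝ
  f : ℝ → ℝ
  φ : Fin N → ℝ → ℝ
  c : ℝ
  γ : ℝ
  b : ℝ
  B : ℝ
  hJsub_sub : ∀ j, Jsub j ⊆ Set.Icc 0 1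
  hJsub_interval : ∀ j, ∃ u v : ℝ, u ≤ v ∧ Jsub j = Set.Icc u v
  hJsub_disj : ∀ i j, i ≠ j → Disjoint (Jsub i) (Jsub j)
  hbij : ∀ j, Set.BijOn f (Jsub j) (Set.Icc 0 1)
  hφ_maps : ∀ j, ∀ x ∈ Set.Icc (0:ℝ) 1, φ j x ∈ Jsub j
  hφ_rinv : ∀ j, ∀ x ∈ Set.Icc (0:ℝ) 1, f (φ j x) = x
  hφ_linv : ∀ j, ∀ x ∈ Jsub j, φ j (f x) = x
  hfdiff : ∀ j, ∀ x ∈ Jsub j, DifferentiableAt ℝ f x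
  hφdiff : ∀ j, ∀ x ∈ Set.Icc (0:ℝ) 1, DifferentiableAt ℝ (φ j) x
  hc : 0 < c
  hγ : γ ∈ Set.Ioc (0:ℝ) 1
  hHolder : ∀ j, ∀ x ∈ Jsub j, ∀ y ∈ Jsub j, |deriv f x - deriv f y| ≤ c * |x - y| ^ γ
  hb : IsGLB ((fun x => |deriv f x|) '' ⋃ j, Jsub j) b
  hB : IsLUB ((fun x => |deriv f x|) '' ⋃ j, Jsub j) B
  hb1 : 1 < b

namespace CookieCutter

variable (cc : CookieCutter)

/-- `φ_σ = φ_{σ_1} ∘ ⋯ ∘ φ_{σ_n}` for a word `σ`. -/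
def wordMap : List (Fin cc.N) → ℝ → ℝ
  | [] => id
  | j :: rest => cc.φ j ∘ wordMap rest

/-- The basic interval `J_σ = φ_σ(J)`. -/
def Jc (σ : List (Fin cc.N)) : Set ℝ := cc.wordMap σ '' Set.Icc 0 1

/-- The diameter `|J_σ|`. -/
def diamJ (σ : List (Fin cc.N)) : ℝ := Metric.diam (cc.Jc σ)

/-- `‖φ'_σ‖ = sup_{x ∈ J} |φ'_σ(x)|`. -/
def φnorm (σ : List (Fin cc.N)) : ℝ :=
  sSup ((fun x => |deriv (cc.wordMap σ) x|) '' Set.Icc 0 1)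

/-- The distortion constant `ξ = exp (c / (b^γ − 1))`. -/
def xi : ℝ := Real.exp (cc.c / (cc.b ^ cc.γ - 1))

/-- The cookie-cutter set `E = ⋂_{n ≥ 1} ⋃_{σ ∈ Ω_n} J_σ`. -/
def E : Set ℝ := ⋂ (n : ℕ) (_ : 1 ≤ n), ⋃ σ : Fin n → Fin cc.N, cc.Jc (List.ofFn σ)

/-- `η = ξ^{9h}`. -/
def eta (h : ℝ) : ℝ := cc.xi ^ ((9:ℝ) * h)

/-- `L = η³ ξ^{3h}`. -/
def Lconst (h : ℝ) : ℝ := (cc.eta h) ^ 3 * cc.xi ^ ((3:ℝ) * h)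

/-- A Gibbs-like measure for the cookie-cutter system: a Borel probability measure
supported on `E` with `η⁻¹|J_σ|^h ≤ μ(J_σ) ≤ η|J_σ|^h` for every word `σ`. -/
def IsGibbsLike (μ : Measure ℝ) (h : ℝ) : Prop :=
  IsProbabilityMeasure μ ∧ μ (cc.Eᶜ) = 0 ∧
    ∀ σ : List (Fin cc.N), σ ≠ [] →
      (cc.eta h)⁻¹ * cc.diamJ σ ^ h ≤ (μ (cc.Jc σ)).toReal ∧
      (μ (cc.Jc σ)).toReal ≤ cc.eta h * cc.diamJ σ ^ h

/-- A finite maximal antichain in `Ω`. -/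
def IsFMA (Γ : Finset (List (Fin cc.N))) : Prop :=
  (∀ σ ∈ Γ, σ ≠ []) ∧
  (∀ ω : ℕ → Fin cc.N, ∃ k : ℕ, 1 ≤ k ∧ (List.ofFn fun i : Fin k => ω i) ∈ Γ) ∧
  ∀ σ ∈ Γ, ∀ τ ∈ Γ, σ <+: τ → σ = τ

end CookieCutter

/-- The `n`-th quantization error of order `r`. -/
def Vnr (μ : Measure ℝ) (n : ℕ) (r : ℝ) : ℝ :=
  sInf ((fun α : Finset ℝ => ∫ x, Metric.infDist x (α : Set ℝ) ^ r ∂μ) ''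
    {α : Finset ℝ | α.Nonempty ∧ α.card ≤ n})

/-- The auxiliary quantization error `u_{n,r}` with `U = (0,1)`. -/
def unr (μ : Measure ℝ) (n : ℕ) (r : ℝ) : ℝ :=
  sInf ((fun α : Finset ℝ =>
      ∫ x, Metric.infDist x ((α : Set ℝ) ∪ (Set.Ioo (0:ℝ) 1)ᶜ) ^ r ∂μ) ''
    {α : Finset ℝ | α.card ≤ n})

/-! The inverse branches contract by `b⁻¹`, so along a word `σ = j :: ρ` the points
`φ_ρ u`, `φ_ρ v` are `b^{-|ρ|}`-close. Since `|φ_j'| = 1 / |f' ∘ φ_j|` and `f'` is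
`γ`-Hölder with `|f'| ≥ b > 1`, the branch `φ_j` distorts derivatives at such points by at
most `exp (c b^{-γ(|ρ|+1)})`. Multiplying along the word, the geometric series bounds the
distortion of `φ_σ` by `exp (c / (b^γ - 1)) = ξ`, uniformly in `σ`. The mean value theorem
then writes `dist (φ_σ x) (φ_σ y)` as `|φ_σ'(ζ)| dist x y`, and `|φ_σ'(ζ)|` lies between
`ξ⁻¹ ‖φ_σ'‖` and `‖φ_σ'‖`. -/

open Finset
open Set (Icc Ioo_subset_Icc_self Icc_subset_Icc mem_iUnion left_mem_Icc)

theorem exists_dist_eq_abs_deriv_mul_dist {f : ℝ → ℝ} {a b x y : ℝ}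
    (hf : ∀ z ∈ Icc a b, DifferentiableAt ℝ f z) (hx : x ∈ Icc a b) (hy : y ∈ Icc a b) :
    ∃ ζ ∈ Icc a b, dist (f x) (f y) = |deriv f ζ| * dist x y := by
  wlog hxy : x ≤ y generalizing x y
  · obtain ⟨ζ, hζ, h⟩ := this hy hx (le_of_not_ge hxy)
    exact ⟨ζ, hζ, by rw [dist_comm, h, dist_comm]⟩
  rcases hxy.eq_or_lt with rfl | hlt
  · exact ⟨x, hx, by simp⟩
  have hsub : Icc x y ⊆ Icc a b := Icc_subset_Icc hx.1 hy.2
  obtain ⟨ζ, hζ, hslope⟩ := exists_deriv_eq_slope f hlt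
    (fun z hz => (hf z (hsub hz)).continuousAt.continuousWithinAt)
    (fun z hz => (hf z (hsub (Ioo_subset_Icc_self hz))).differentiableWithinAt)
  refine ⟨ζ, hsub (Ioo_subset_Icc_self hζ), ?_⟩
  rw [dist_comm, dist_comm x, Real.dist_eq, Real.dist_eq, hslope, abs_div,
    abs_of_pos (sub_pos.2 hlt), div_mul_cancel₀ _ (sub_pos.2 hlt).ne']

theorem inv_le_exp_mul_inv_of_le_add {a b e : ℝ} (ha : 1 ≤ a) (he : 0 ≤ e) (hb : 0 < b)
    (hba : b ≤ a + e) : a⁻¹ ≤ Real.exp e * b⁻¹ := by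
  have hb_le : b ≤ a * Real.exp e :=
    calc b ≤ a + e := hba
      _ ≤ a * (e + 1) := by nlinarith
      _ ≤ a * Real.exp e := by gcongr; exact Real.add_one_le_exp e
  rw [← div_eq_mul_inv, le_div_iff₀ hb, inv_mul_le_iff₀ (by linarith)]
  linarith

theorem sum_range_pow_succ_le {q : ℝ} (hq₀ : 0 ≤ q) (hq₁ : q < 1) (n : ℕ) :
    ∑ m ∈ range n, q ^ (m + 1) ≤ q / (1 - q) := by
  simp_rw [pow_succ', ← mul_sum, ← mul_one_div q]
  refine mul_le_mul_of_nonneg_left ?_ hq₀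
  simpa using geom_sum_Ico_le_of_lt_one (m := 0) (n := n) hq₀ hq₁

namespace CookieCutter

variable (cc : CookieCutter)

lemma b_pos : 0 < cc.b := one_pos.trans cc.hb1

lemma xi_pos : 0 < cc.xi := Real.exp_pos _

lemma b_le_abs_deriv_f {j : Fin cc.N} {z : ℝ} (hz : z ∈ cc.Jsub j) :
    cc.b ≤ |deriv cc.f z| :=
  cc.hb.1 ⟨z, mem_iUnion.2 ⟨j, hz⟩, rfl⟩

lemma φ_mem_Icc {j : Fin cc.N} {x : ℝ} (hx : x ∈ Icc (0:ℝ) 1) : cc.φ j x ∈ Icc (0:ℝ) 1 :=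
  cc.hJsub_sub j (cc.hφ_maps j x hx)

lemma deriv_f_mul_deriv_φ {j : Fin cc.N} {x : ℝ} (hx : x ∈ Icc (0:ℝ) 1) :
    deriv cc.f (cc.φ j x) * deriv (cc.φ j) x = 1 := by
  have hcomp : HasDerivWithinAt (cc.f ∘ cc.φ j) (deriv cc.f (cc.φ j x) * deriv (cc.φ j) x)
      (Icc 0 1) x :=
    ((cc.hfdiff j _ (cc.hφ_maps j x hx)).hasDerivAt.comp x
      (cc.hφdiff j x hx).hasDerivAt).hasDerivWithinAt
  have hid : HasDerivWithinAt (cc.f ∘ cc.φ j) 1 (Icc 0 1) x :=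
    (hasDerivWithinAt_id x _).congr (fun y hy => cc.hφ_rinv j y hy) (cc.hφ_rinv j x hx)
  exact (uniqueDiffOn_Icc one_pos x hx).eq_deriv _ hcomp hid

lemma abs_deriv_φ {j : Fin cc.N} {x : ℝ} (hx : x ∈ Icc (0:ℝ) 1) :
    |deriv (cc.φ j) x| = |deriv cc.f (cc.φ j x)|⁻¹ :=
  eq_inv_of_mul_eq_one_right (by rw [← abs_mul, cc.deriv_f_mul_deriv_φ hx, abs_one])

lemma abs_deriv_φ_le {j : Fin cc.N} {x : ℝ} (hx : x ∈ Icc (0:ℝ) 1) :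
    |deriv (cc.φ j) x| ≤ cc.b⁻¹ := by
  rw [cc.abs_deriv_φ hx]
  exact inv_anti₀ cc.b_pos (cc.b_le_abs_deriv_f (cc.hφ_maps j x hx))

lemma dist_φ_le {j : Fin cc.N} {x y : ℝ} (hx : x ∈ Icc (0:ℝ) 1) (hy : y ∈ Icc (0:ℝ) 1) :
    dist (cc.φ j x) (cc.φ j y) ≤ cc.b⁻¹ * dist x y := by
  simpa only [Real.dist_eq, Real.norm_eq_abs] using
    (convex_Icc (0:ℝ) 1).norm_image_sub_le_of_norm_deriv_le (cc.hφdiff j)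
      (fun z hz => (Real.norm_eq_abs _).trans_le (cc.abs_deriv_φ_le hz)) hy hx

lemma abs_deriv_φ_le_exp_mul {j : Fin cc.N} {x y : ℝ} (hx : x ∈ Icc (0:ℝ) 1)
    (hy : y ∈ Icc (0:ℝ) 1) :
    |deriv (cc.φ j) x| ≤ Real.exp (cc.c * (cc.b⁻¹ * dist x y) ^ cc.γ) * |deriv (cc.φ j) y| := by
  rw [cc.abs_deriv_φ hx, cc.abs_deriv_φ hy]
  have hbx := cc.b_le_abs_deriv_f (cc.hφ_maps j x hx)
  have hby := cc.b_le_abs_deriv_f (cc.hφ_maps j y hy)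
  refine inv_le_exp_mul_inv_of_le_add (cc.hb1.le.trans hbx) (mul_nonneg cc.hc.le
    (Real.rpow_nonneg (mul_nonneg (inv_nonneg.2 cc.b_pos.le) dist_nonneg) _))
    (cc.b_pos.trans_le hby) ?_
  have holder : |deriv cc.f (cc.φ j y)| - |deriv cc.f (cc.φ j x)| ≤
      cc.c * dist (cc.φ j y) (cc.φ j x) ^ cc.γ :=
    (abs_sub_abs_le_abs_sub _ _).trans
      (cc.hHolder j _ (cc.hφ_maps j y hy) _ (cc.hφ_maps j x hx))
  have hφ : dist (cc.φ j y) (cc.φ j x) ^ cc.γ ≤ (cc.b⁻¹ * dist x y) ^ cc.γ := by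
    rw [dist_comm x]
    exact Real.rpow_le_rpow dist_nonneg (cc.dist_φ_le hy hx) cc.hγ.1.le
  linarith [mul_le_mul_of_nonneg_left hφ cc.hc.le]

lemma wordMap_mem_Icc : ∀ (σ : List (Fin cc.N)) {x : ℝ}, x ∈ Icc (0:ℝ) 1 →
    cc.wordMap σ x ∈ Icc (0:ℝ) 1
  | [], _, hx => hx
  | _ :: ρ, _, hx => cc.φ_mem_Icc (wordMap_mem_Icc ρ hx)

lemma differentiableAt_wordMap : ∀ (σ : List (Fin cc.N)), ∀ x ∈ Icc (0:ℝ) 1,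
    DifferentiableAt ℝ (cc.wordMap σ) x
  | [], _, _ => differentiableAt_id
  | j :: ρ, x, hx =>
    (cc.hφdiff j _ (cc.wordMap_mem_Icc ρ hx)).comp x (differentiableAt_wordMap ρ x hx)

lemma deriv_wordMap_cons (j : Fin cc.N) (ρ : List (Fin cc.N)) {x : ℝ} (hx : x ∈ Icc (0:ℝ) 1) :
    deriv (cc.wordMap (j :: ρ)) x = deriv (cc.φ j) (cc.wordMap ρ x) * deriv (cc.wordMap ρ) x :=
  ((cc.hφdiff j _ (cc.wordMap_mem_Icc ρ hx)).hasDerivAt.comp x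
    (cc.differentiableAt_wordMap ρ x hx).hasDerivAt).deriv

lemma dist_wordMap_le (σ : List (Fin cc.N)) {x y : ℝ} (hx : x ∈ Icc (0:ℝ) 1)
    (hy : y ∈ Icc (0:ℝ) 1) :
    dist (cc.wordMap σ x) (cc.wordMap σ y) ≤ cc.b⁻¹ ^ σ.length * dist x y := by
  induction σ with
  | nil => simp [wordMap]
  | cons j ρ ih =>
    calc dist (cc.wordMap (j :: ρ) x) (cc.wordMap (j :: ρ) y)
        ≤ cc.b⁻¹ * dist (cc.wordMap ρ x) (cc.wordMap ρ y) :=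
          cc.dist_φ_le (cc.wordMap_mem_Icc ρ hx) (cc.wordMap_mem_Icc ρ hy)
      _ ≤ cc.b⁻¹ * (cc.b⁻¹ ^ ρ.length * dist x y) := by
          gcongr
          exact inv_nonneg.2 cc.b_pos.le
      _ = cc.b⁻¹ ^ (j :: ρ).length * dist x y := by
          rw [List.length_cons, pow_succ']; ring

lemma abs_deriv_wordMap_le_exp_mul (σ : List (Fin cc.N)) {u v : ℝ} (hu : u ∈ Icc (0:ℝ) 1)
    (hv : v ∈ Icc (0:ℝ) 1) :
    |deriv (cc.wordMap σ) u| ≤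
      Real.exp (cc.c * ∑ m ∈ range σ.length, (cc.b⁻¹ ^ (m + 1)) ^ cc.γ) *
        |deriv (cc.wordMap σ) v| := by
  induction σ with
  | nil => simp [wordMap]
  | cons j ρ ih =>
    have hb_inv : 0 ≤ cc.b⁻¹ := inv_nonneg.2 cc.b_pos.le
    have hclose : cc.b⁻¹ * dist (cc.wordMap ρ u) (cc.wordMap ρ v) ≤ cc.b⁻¹ ^ (ρ.length + 1) :=
      calc cc.b⁻¹ * dist (cc.wordMap ρ u) (cc.wordMap ρ v)
          ≤ cc.b⁻¹ * (cc.b⁻¹ ^ ρ.length * 1) := by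
            gcongr
            exact (cc.dist_wordMap_le ρ hu hv).trans
              (by gcongr; exact Real.dist_le_of_mem_Icc_01 hu hv)
        _ = cc.b⁻¹ ^ (ρ.length + 1) := by ring
    have hbranch : |deriv (cc.φ j) (cc.wordMap ρ u)| ≤
        Real.exp (cc.c * (cc.b⁻¹ ^ (ρ.length + 1)) ^ cc.γ) *
          |deriv (cc.φ j) (cc.wordMap ρ v)| := by
      refine (cc.abs_deriv_φ_le_exp_mul (cc.wordMap_mem_Icc ρ hu)
        (cc.wordMap_mem_Icc ρ hv)).trans ?_
      gcongr
      · exact cc.hc.le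
      · exact cc.hγ.1.le
    rw [cc.deriv_wordMap_cons j ρ hu, cc.deriv_wordMap_cons j ρ hv, abs_mul, abs_mul,
      List.length_cons, sum_range_succ, mul_add, Real.exp_add]
    calc |deriv (cc.φ j) (cc.wordMap ρ u)| * |deriv (cc.wordMap ρ) u|
        ≤ (Real.exp (cc.c * (cc.b⁻¹ ^ (ρ.length + 1)) ^ cc.γ) *
            |deriv (cc.φ j) (cc.wordMap ρ v)|) *
          (Real.exp (cc.c * ∑ m ∈ range ρ.length, (cc.b⁻¹ ^ (m + 1)) ^ cc.γ) *
            |deriv (cc.wordMap ρ) v|) :=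
          mul_le_mul hbranch ih (abs_nonneg _) (by positivity)
      _ = _ := by ring

lemma abs_deriv_wordMap_le_xi_mul (σ : List (Fin cc.N)) {u v : ℝ} (hu : u ∈ Icc (0:ℝ) 1)
    (hv : v ∈ Icc (0:ℝ) 1) :
    |deriv (cc.wordMap σ) u| ≤ cc.xi * |deriv (cc.wordMap σ) v| := by
  refine (cc.abs_deriv_wordMap_le_exp_mul σ hu hv).trans ?_
  gcongr
  set q := cc.b⁻¹ ^ cc.γ with hq
  have hq₀ : 0 ≤ q := Real.rpow_nonneg (inv_nonneg.2 cc.b_pos.le) _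
  have hq₁ : q < 1 :=
    Real.rpow_lt_one (inv_nonneg.2 cc.b_pos.le) (inv_lt_one_of_one_lt₀ cc.hb1) cc.hγ.1
  have hbγ : q / (1 - q) = (cc.b ^ cc.γ - 1)⁻¹ := by
    have : 1 < cc.b ^ cc.γ := Real.one_lt_rpow cc.hb1 cc.hγ.1
    rw [hq, Real.inv_rpow cc.b_pos.le]
    field_simp
  rw [xi, div_eq_mul_inv, ← hbγ]
  simp_rw [← Real.rpow_pow_comm (inv_nonneg.2 cc.b_pos.le)]
  gcongr
  · exact cc.hc.le
  · exact sum_range_pow_succ_le hq₀ hq₁ σ.length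

lemma bddAbove_abs_deriv_wordMap (σ : List (Fin cc.N)) :
    BddAbove ((fun x => |deriv (cc.wordMap σ) x|) '' Icc 0 1) :=
  ⟨cc.xi * |deriv (cc.wordMap σ) 0|, by
    rintro _ ⟨u, hu, rfl⟩
    exact cc.abs_deriv_wordMap_le_xi_mul σ hu (left_mem_Icc.2 zero_le_one)⟩

lemma abs_deriv_wordMap_le_φnorm (σ : List (Fin cc.N)) {x : ℝ} (hx : x ∈ Icc (0:ℝ) 1) :
    |deriv (cc.wordMap σ) x| ≤ cc.φnorm σ :=
  le_csSup (cc.bddAbove_abs_deriv_wordMap σ) ⟨x, hx, rfl⟩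

lemma φnorm_le_xi_mul (σ : List (Fin cc.N)) {x : ℝ} (hx : x ∈ Icc (0:ℝ) 1) :
    cc.φnorm σ ≤ cc.xi * |deriv (cc.wordMap σ) x| :=
  csSup_le ((Set.nonempty_Icc.2 zero_le_one).image _) (by
    rintro _ ⟨u, hu, rfl⟩
    exact cc.abs_deriv_wordMap_le_xi_mul σ hu hx)

end CookieCutter

theorem wordMap_lipschitz_bounds (cc : CookieCutter) :
    ∀ x ∈ Set.Icc (0:ℝ) 1, ∀ y ∈ Set.Icc (0:ℝ) 1, ∀ σ : List (Fin cc.N), σ ≠ [] →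
      cc.xi⁻¹ * cc.φnorm σ * dist x y ≤ dist (cc.wordMap σ x) (cc.wordMap σ y) ∧
      dist (cc.wordMap σ x) (cc.wordMap σ y) ≤ cc.φnorm σ * dist x y := by
  intro x hx y hy σ _
  obtain ⟨ζ, hζ, hmvt⟩ :=
    exists_dist_eq_abs_deriv_mul_dist (cc.differentiableAt_wordMap σ) hx hy
  rw [hmvt]
  constructor
  · gcongr
    rw [inv_mul_le_iff₀ cc.xi_pos]
    exact cc.φnorm_le_xi_mul σ hζ
  · gcongr
    exact cc.abs_deriv_wordMap_le_φnorm σ hζ
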